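/- Let g:[a,b]→ℝ be continuous at a and b, left-continuous on (a,b), and increasing, and let f:[a,b]→ℝ be g-Lipschitz continuous with constant H. If the continuous part g^C is Lipschitz continuous with constant H, then the continuous part f^C is Lipschitz continuous with constant H². -/

import Mathlib

open Set

/-- Right jump of a function: `u(t⁺) - u(t)`. -/
noncomputable def rjump (u : ℝ → ℝ) (t : ℝ) : ℝ := Function.rightLim u t - u t

/-- Cumulative jump part of `u` on `[a, t)`: `u^B(t) = Σ_{s ∈ [a,t)} Δ⁺u(s)`. -/
noncomputable def jumpPart (u : ℝ → ℝ) (a t : ℝ) : ℝ :=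
  ∑' s : ℝ, Set.indicator (Set.Ico a t) (fun v => rjump u v) s

/-- Continuous part of `u` (relative to the base point `a`): `u^C = u - u^B`. -/
noncomputable def contPart (u : ℝ → ℝ) (a t : ℝ) : ℝ := u t - jumpPart u a t

/-- `I` is the Kurzweil–Stieltjes integral `∫_a^b f dg`: for every `ε > 0` there is a
gauge `δ` such that every `δ`-fine tagged partition of `[a,b]` has Riemann–Stieltjes
sum within `ε` of `I`. -/
def IsKSIntegral (f g : ℝ → ℝ) (a b I : ℝ) : Prop :=
  ∀ ε > (0:ℝ), ∃ δ : ℝ → ℝ, (∀ x, 0 < δ x) ∧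
    ∀ (n : ℕ) (t ξ : ℕ → ℝ),
      t 0 = a → t n = b →
      (∀ i < n, t i < t (i + 1)) →
      (∀ i < n, t i ≤ ξ i ∧ ξ i ≤ t (i + 1)) →
      (∀ i < n, ξ i - δ (ξ i) < t i ∧ t (i + 1) < ξ i + δ (ξ i)) →
      |(∑ i ∈ Finset.range n, f (ξ i) * (g (t (i + 1)) - g (t i))) - I| < ε

/-- `f` is `g`-Lipschitz continuous on `[a,b]` with constant `H`. -/
def GLipschitzOn (f g : ℝ → ℝ) (H a b : ℝ) : Prop :=
  ∀ t ∈ Set.Icc a b, ∀ s ∈ Set.Icc a b, |f t - f s| ≤ H * |g t - g s|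

/-- `g` is left-continuous at every point of `s`. -/
def LeftContOn (g : ℝ → ℝ) (s : Set ℝ) : Prop :=
  ∀ t ∈ s, Filter.Tendsto g (nhdsWithin t (Set.Iio t)) (nhds (g t))

/-! Since `|f t - f s| ≤ H (g t - g s)` for `s ≤ t`, both `H g + f` and `H g - f` are increasing.
The jumps of an increasing function on `[y, x)` add up to at most its increment, so its
continuous part is increasing as well; and taking continuous parts is linear. Hence
`H g^C ± f^C` are increasing, i.e. `|Δf^C| ≤ H Δg^C ≤ H² |Δx|`. -/

open Filter Function Topology

section Jumps

variable {u : ℝ → ℝ} {a b v x y : ℝ}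

theorem MonotoneOn.tendsto_rightLim (hu : MonotoneOn u (Icc a b)) (hv : v ∈ Ico a b) :
    Tendsto u (𝓝[>] v) (𝓝 (rightLim u v)) := by
  have hsub : Ioo v b ⊆ Icc a b := fun t ht => ⟨hv.1.trans ht.1.le, ht.2.le⟩
  have hbdd : BddBelow (u '' Ioo v b) := by
    refine ⟨u v, ?_⟩
    rintro _ ⟨t, ht, rfl⟩
    exact hu ⟨hv.1, hv.2.le⟩ (hsub ht) ht.1.le
  have h := (hu.mono hsub).tendsto_nhdsWithin_Ioo_right (nonempty_Ioo.2 hv.2) hbdd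
  rwa [rightLim_eq_of_tendsto h]

theorem MonotoneOn.rightLim_le (hu : MonotoneOn u (Icc a b)) (hv : v ∈ Ico a b) (hvx : v < x)
    (hxb : x ≤ b) : rightLim u v ≤ u x := by
  refine le_of_tendsto (hu.tendsto_rightLim hv) ?_
  filter_upwards [Ioo_mem_nhdsGT hvx] with t ht
  exact hu ⟨hv.1.trans ht.1.le, ht.2.le.trans hxb⟩ ⟨hv.1.trans hvx.le, hxb⟩ ht.2.le

theorem MonotoneOn.rjump_nonneg (hu : MonotoneOn u (Icc a b)) (hv : v ∈ Ico a b) :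
    0 ≤ rjump u v := by
  refine sub_nonneg.2 (ge_of_tendsto (hu.tendsto_rightLim hv) ?_)
  filter_upwards [Ioo_mem_nhdsGT hv.2] with t ht
  exact hu ⟨hv.1, hv.2.le⟩ ⟨hv.1.trans ht.1.le, ht.2.le⟩ ht.1.le

theorem MonotoneOn.sum_rjump_le (hu : MonotoneOn u (Icc a b)) (hay : a ≤ y) (F : Finset ℝ) :
    ∀ x ≤ b, y ≤ x → ↑F ⊆ Ico y x → ∑ s ∈ F, rjump u s ≤ u x - u y := by
  induction F using Finset.induction_on_max with
  | empty =>
    intro x hxb hyx _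
    simpa using hu ⟨hay, hyx.trans hxb⟩ ⟨hay.trans hyx, hxb⟩ hyx
  | insert m F hFm ih =>
    intro x hxb hyx hsub
    have hm : m ∈ Ico y x := hsub (by simp)
    have hmb : m ∈ Ico a b := ⟨hay.trans hm.1, hm.2.trans_le hxb⟩
    have hF : ∑ s ∈ F, rjump u s ≤ u m - u y :=
      ih m hmb.2.le hm.1 fun s hs => ⟨(hsub (by simp [hs])).1, hFm s hs⟩
    have hjump : rjump u m ≤ u x - u m := sub_le_sub_right (hu.rightLim_le hmb hm.2 hxb) _
    rw [Finset.sum_insert fun hmF => (hFm m hmF).false]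
    linarith

theorem MonotoneOn.sum_indicator_rjump_le (hu : MonotoneOn u (Icc a b)) (hay : a ≤ y)
    (hyx : y ≤ x) (hxb : x ≤ b) (F : Finset ℝ) :
    ∑ s ∈ F, (Ico y x).indicator (rjump u) s ≤ u x - u y := by
  classical
  rw [Finset.sum_indicator_eq_sum_filter]
  exact hu.sum_rjump_le hay _ x hxb hyx fun s hs => (Finset.mem_filter.1 hs).2

theorem MonotoneOn.indicator_rjump_nonneg (hu : MonotoneOn u (Icc a b)) (hay : a ≤ y)
    (hxb : x ≤ b) : 0 ≤ (Ico y x).indicator (rjump u) :=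
  indicator_nonneg fun _ hs => hu.rjump_nonneg ⟨hay.trans hs.1, hs.2.trans_le hxb⟩

theorem MonotoneOn.summable_indicator_rjump (hu : MonotoneOn u (Icc a b)) (hay : a ≤ y)
    (hyx : y ≤ x) (hxb : x ≤ b) : Summable ((Ico y x).indicator (rjump u)) :=
  summable_of_sum_le (hu.indicator_rjump_nonneg hay hxb) (hu.sum_indicator_rjump_le hay hyx hxb)

theorem MonotoneOn.tsum_indicator_rjump_le (hu : MonotoneOn u (Icc a b)) (hay : a ≤ y)
    (hyx : y ≤ x) (hxb : x ≤ b) : ∑' s, (Ico y x).indicator (rjump u) s ≤ u x - u y :=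
  Real.tsum_le_of_sum_le (hu.indicator_rjump_nonneg hay hxb)
    (hu.sum_indicator_rjump_le hay hyx hxb)

theorem jumpPart_eq_add_tsum (hay : a ≤ y) (hyx : y ≤ x)
    (h₁ : Summable ((Ico a y).indicator (rjump u)))
    (h₂ : Summable ((Ico y x).indicator (rjump u))) :
    jumpPart u a x = jumpPart u a y + ∑' s, (Ico y x).indicator (rjump u) s := by
  rw [jumpPart, jumpPart, ← h₁.tsum_add h₂, ← Ico_union_Ico_eq_Ico hay hyx]
  simp_rw [indicator_union_of_disjoint Ico_disjoint_Ico_same]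

theorem MonotoneOn.monotoneOn_contPart (hu : MonotoneOn u (Icc a b)) :
    MonotoneOn (contPart u a) (Icc a b) := by
  intro y hy x hx hyx
  have hsplit := jumpPart_eq_add_tsum hy.1 hyx
    (hu.summable_indicator_rjump le_rfl hy.1 hy.2) (hu.summable_indicator_rjump hy.1 hyx hx.2)
  have hle := hu.tsum_indicator_rjump_le hy.1 hyx hx.2
  simp only [contPart]
  linarith

end Jumps

section LinearCombination

variable {u w : ℝ → ℝ} {a v x : ℝ} {s : Set ℝ}

theorem tendsto_rightLim_linear_comb (c d : ℝ) (hu : Tendsto u (𝓝[>] v) (𝓝 (rightLim u v)))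
    (hw : Tendsto w (𝓝[>] v) (𝓝 (rightLim w v))) :
    Tendsto (fun t => c * u t + d * w t) (𝓝[>] v)
      (𝓝 (rightLim (fun t => c * u t + d * w t) v)) := by
  have h := (hu.const_mul c).add (hw.const_mul d)
  rwa [rightLim_eq_of_tendsto h]

theorem rjump_linear_comb (c d : ℝ) (hu : Tendsto u (𝓝[>] v) (𝓝 (rightLim u v)))
    (hw : Tendsto w (𝓝[>] v) (𝓝 (rightLim w v))) :
    rjump (fun t => c * u t + d * w t) v = c * rjump u v + d * rjump w v := by
  rw [rjump, rjump, rjump, rightLim_eq_of_tendsto ((hu.const_mul c).add (hw.const_mul d))]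
  ring

theorem indicator_rjump_linear_comb (c d : ℝ)
    (hu : ∀ v ∈ s, Tendsto u (𝓝[>] v) (𝓝 (rightLim u v)))
    (hw : ∀ v ∈ s, Tendsto w (𝓝[>] v) (𝓝 (rightLim w v))) :
    s.indicator (rjump fun t => c * u t + d * w t)
      = fun t => c * s.indicator (rjump u) t + d * s.indicator (rjump w) t := by
  funext t
  by_cases ht : t ∈ s
  · simp only [indicator_of_mem ht, rjump_linear_comb c d (hu t ht) (hw t ht)]
  · simp only [indicator_of_notMem ht, mul_zero, add_zero]

theorem contPart_linear_comb (c d : ℝ)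
    (hu : ∀ v ∈ Ico a x, Tendsto u (𝓝[>] v) (𝓝 (rightLim u v)))
    (hw : ∀ v ∈ Ico a x, Tendsto w (𝓝[>] v) (𝓝 (rightLim w v)))
    (hsu : Summable ((Ico a x).indicator (rjump u)))
    (hsw : Summable ((Ico a x).indicator (rjump w))) :
    contPart (fun t => c * u t + d * w t) a x = c * contPart u a x + d * contPart w a x := by
  simp only [contPart, jumpPart]
  rw [indicator_rjump_linear_comb c d hu hw, (hsu.mul_left c).tsum_add (hsw.mul_left d),
    tsum_mul_left, tsum_mul_left]
  ring

end LinearCombination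

theorem eq_half_add_sub_half (f g : ℝ → ℝ) (H : ℝ) :
    f = fun t => 2⁻¹ * (H * g t + 1 * f t) + (-2⁻¹) * (H * g t + -1 * f t) := by
  funext t
  ring

namespace GLipschitzOn

variable {f g : ℝ → ℝ} {H a b v x y : ℝ}

theorem monotoneOn_linear_comb (hf : GLipschitzOn f g H a b) (hg : MonotoneOn g (Icc a b))
    {σ : ℝ} (hσ : |σ| ≤ 1) : MonotoneOn (fun t => H * g t + σ * f t) (Icc a b) := by
  intro s hs t ht hst
  have hgst : 0 ≤ g t - g s := sub_nonneg.2 (hg hs ht hst)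
  have hlip : |f t - f s| ≤ H * (g t - g s) := abs_of_nonneg hgst ▸ hf t ht s hs
  have hσf : |σ * (f t - f s)| ≤ |f t - f s| := by
    rw [abs_mul]
    exact mul_le_of_le_one_left (abs_nonneg _) hσ
  have hneg : -(σ * (f t - f s)) ≤ H * (g t - g s) := (neg_le_abs _).trans (hσf.trans hlip)
  show H * g s + σ * f s ≤ H * g t + σ * f t
  linarith

theorem tendsto_rightLim (hf : GLipschitzOn f g H a b) (hg : MonotoneOn g (Icc a b))
    (hv : v ∈ Ico a b) : Tendsto f (𝓝[>] v) (𝓝 (rightLim f v)) := by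
  rw [eq_half_add_sub_half f g H]
  exact tendsto_rightLim_linear_comb _ _
    ((hf.monotoneOn_linear_comb hg (by simp)).tendsto_rightLim hv)
    ((hf.monotoneOn_linear_comb hg (by simp)).tendsto_rightLim hv)

theorem summable_indicator_rjump (hf : GLipschitzOn f g H a b) (hg : MonotoneOn g (Icc a b))
    (hax : a ≤ x) (hxb : x ≤ b) : Summable ((Ico a x).indicator (rjump f)) := by
  have hp := hf.monotoneOn_linear_comb hg (σ := 1) (by simp)
  have hm := hf.monotoneOn_linear_comb hg (σ := -1) (by simp)
  have hsub : Ico a x ⊆ Ico a b := Ico_subset_Ico_right hxb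
  rw [eq_half_add_sub_half f g H, indicator_rjump_linear_comb _ _
    (fun v hv => hp.tendsto_rightLim (hsub hv)) (fun v hv => hm.tendsto_rightLim (hsub hv))]
  exact ((hp.summable_indicator_rjump le_rfl hax hxb).mul_left _).add
    ((hm.summable_indicator_rjump le_rfl hax hxb).mul_left _)

theorem abs_sub_contPart_le (hf : GLipschitzOn f g H a b) (hg : MonotoneOn g (Icc a b))
    (hy : y ∈ Icc a b) (hx : x ∈ Icc a b) (hyx : y ≤ x) :
    |contPart f a x - contPart f a y| ≤ H * (contPart g a x - contPart g a y) := by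
  have hlin : ∀ σ, ∀ z ∈ Icc a b,
      contPart (fun t => H * g t + σ * f t) a z = H * contPart g a z + σ * contPart f a z :=
    fun σ z hz => contPart_linear_comb H σ
      (fun v hv => hg.tendsto_rightLim ⟨hv.1, hv.2.trans_le hz.2⟩)
      (fun v hv => hf.tendsto_rightLim hg ⟨hv.1, hv.2.trans_le hz.2⟩)
      (hg.summable_indicator_rjump le_rfl hz.1 hz.2) (hf.summable_indicator_rjump hg hz.1 hz.2)
  have hp := (hf.monotoneOn_linear_comb hg (σ := 1) (by simp)).monotoneOn_contPart hy hx hyx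
  have hm := (hf.monotoneOn_linear_comb hg (σ := -1) (by simp)).monotoneOn_contPart hy hx hyx
  rw [hlin 1 x hx, hlin 1 y hy] at hp
  rw [hlin (-1) x hx, hlin (-1) y hy] at hm
  rw [abs_le]
  constructor <;> linarith

end GLipschitzOn

theorem contPart_lipschitz_sq_general
    (a b H : ℝ) (g f : ℝ → ℝ)
    (hg : MonotoneOn g (Set.Icc a b))
    (hf : GLipschitzOn f g H a b)
    (hgC : ∀ x ∈ Set.Icc a b, ∀ y ∈ Set.Icc a b,
      |contPart g a x - contPart g a y| ≤ H * |x - y|) :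
    ∀ x ∈ Set.Icc a b, ∀ y ∈ Set.Icc a b,
      |contPart f a x - contPart f a y| ≤ H ^ 2 * |x - y| := by
  intro x hx y hy
  wlog hyx : y ≤ x generalizing x y
  · rw [abs_sub_comm, abs_sub_comm x]
    exact this y hy x hx (le_of_not_ge hyx)
  have hf_le := hf.abs_sub_contPart_le hg hy hx hyx
  have hgC_nonneg : 0 ≤ contPart g a x - contPart g a y :=
    sub_nonneg.2 (hg.monotoneOn_contPart hy hx hyx)
  have hgC_le := abs_of_nonneg hgC_nonneg ▸ hgC x hx y hy
  rcases le_or_gt 0 H with hH | hH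
  · nlinarith [mul_le_mul_of_nonneg_left hgC_le hH]
  · nlinarith [mul_nonpos_of_nonpos_of_nonneg hH.le hgC_nonneg, sq_nonneg H, abs_nonneg (x - y)]

/-- If `g : [a,b] → ℝ` is continuous at `a` and `b`, left-continuous on
`(a,b)` and increasing, `f` is `g`-Lipschitz with constant `H`, and `g^C` is Lipschitz with
constant `H`, then `f^C` is Lipschitz with constant `H²`. -/
theorem contPart_lipschitz_sq
    (a b H : ℝ) (hab : a ≤ b) (g f : ℝ → ℝ)
    (hg : MonotoneOn g (Set.Icc a b))
    (hga : ContinuousWithinAt g (Set.Icc a b) a)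
    (hgb : ContinuousWithinAt g (Set.Icc a b) b)
    (hglc : LeftContOn g (Set.Ioo a b))
    (hf : GLipschitzOn f g H a b)
    (hgC : ∀ x ∈ Set.Icc a b, ∀ y ∈ Set.Icc a b,
      |contPart g a x - contPart g a y| ≤ H * |x - y|) :
    ∀ x ∈ Set.Icc a b, ∀ y ∈ Set.Icc a b,
      |contPart f a x - contPart f a y| ≤ H ^ 2 * |x - y| :=
  contPart_lipschitz_sq_general a b H g f hg hf hgC
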